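/- Over all (max,+) multiplications S(T'−R_{T'}) ⋆ S(R_{T'}) performed in the cubic dynamic program on a tree with n edges, the sum of the products |E(T'−R_{T'})|·|E(R_{T'})| is at most n², i.e., each ordered pair of edges of T is counted across at most one multiplication. -/
import Mathlib


/-- A rooted, ordered, edge-labeled tree: a root with an ordered list of
(edge label, child subtree) pairs. -/
inductive RTree (α : Type) : Type
  | node : List (α × RTree α) → RTree α

namespace RTree
variable {α : Type}

mutual
  /-- Number of edges of a rooted tree. -/
  def numEdges : RTree α → ℕ
    | .node cs => numEdgesL cs
  def numEdgesL : List (α × RTree α) → ℕ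
    | [] => 0
    | (_, t) :: rest => 1 + numEdges t + numEdgesL rest
end

/-- `SplitCost T k`: the cubic dynamic program on `T`, which repeatedly splits a tree whose
root has more than one child into `T' − R_{T'}` (all but the last child's subtree) and
`R_{T'}` (the last child's subtree with its root edge), performs `(max,+)` multiplications
of total pair-count `k = ∑ |E(T'−R_{T'})|·|E(R_{T'})|`. -/
inductive SplitCost : RTree α → ℕ → Prop
  | nil : SplitCost (.node []) 0
  | single (a : α) (cs : List (α × RTree α)) (k : ℕ) :
      SplitCost (.node cs) k → SplitCost (.node [(a, .node cs)]) k
  | split (cs : List (α × RTree α)) (hne : cs ≠ []) (h2 : 2 ≤ cs.length) (k₁ k₂ : ℕ) :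
      SplitCost (.node cs.dropLast) k₁ →
      SplitCost (.node [cs.getLast hne]) k₂ →
      SplitCost (.node cs)
        (k₁ + k₂ +
          numEdges (.node cs.dropLast : RTree α) * numEdges (.node [cs.getLast hne] : RTree α))

end RTree


theorem RTree.numEdgesL_append {α : Type} (l₁ l₂ : List (α × RTree α)) :
    RTree.numEdgesL (l₁ ++ l₂) = RTree.numEdgesL l₁ + RTree.numEdgesL l₂ := by
  induction l₁ with
  | nil => simp [RTree.numEdgesL]
  | cons h t ih => simp [RTree.numEdgesL, ih]; ring

/-- over all `(max,+)` multiplications performed by the cubic dynamic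
program on a tree with `n` edges, the sum of the products `|E(T'−R_{T'})|·|E(R_{T'})|`
is at most `n²`. -/
theorem stmt16 {α : Type} (T : RTree α) (k : ℕ) (h : RTree.SplitCost T k) :
    k ≤ T.numEdges ^ 2 := by
  induction h with
  | nil => simp [RTree.numEdges, RTree.numEdgesL]
  | single a cs k _ ih =>
      simp only [RTree.numEdges, RTree.numEdgesL] at *
      exact ih.trans (Nat.pow_le_pow_left (by omega) 2)
  | split cs hne h2 k₁ k₂ _ _ ih1 ih2 =>
      have hsum : RTree.numEdgesL cs =
          RTree.numEdgesL cs.dropLast + RTree.numEdgesL [cs.getLast hne] := by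
        conv_lhs => rw [← List.dropLast_append_getLast hne]
        exact RTree.numEdgesL_append _ _
      simp only [RTree.numEdges] at *
      rw [hsum]
      nlinarith
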